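/- (Step in the proof of Theorem XI: P_n and P̃_n commute on the unit-invariant subspace) Let n ≥ 0 be an integer and let φ : ℚ_p → ℂ be a Schwartz–Bruhat function invariant under dilation by units (φ(u·x) = φ(x) whenever ‖u‖ = 1). Then pointwise on ℚ_p: 𝓕(1_{B_n} · 𝓕⁻¹(1_{B_n} · φ)) = 1_{B_n} · 𝓕(1_{B_n} · (𝓕⁻¹φ)); that is, P̃_n P_n φ = P_n P̃_n φ. -/

import Mathlib

open MeasureTheory Complex

/-- Fourier transform on `ℚ_[p]` with respect to the additive character `ψ`
and the Haar measure `μ`: `𝓕φ(x) = ∫ φ(y)·ψ(−x·y) dμ(y)`. -/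
noncomputable def fourierT (p : ℕ) [Fact p.Prime] [MeasurableSpace ℚ_[p]]
    (μ : Measure ℚ_[p]) (ψ : ℚ_[p] → ℂ) (φ : ℚ_[p] → ℂ) : ℚ_[p] → ℂ :=
  fun x => ∫ y, φ y * ψ (-(x * y)) ∂μ

/-- Inverse Fourier transform: `𝓕⁻¹φ(x) = ∫ φ(y)·ψ(x·y) dμ(y)`. -/
noncomputable def fourierInvT (p : ℕ) [Fact p.Prime] [MeasurableSpace ℚ_[p]]
    (μ : Measure ℚ_[p]) (ψ : ℚ_[p] → ℂ) (φ : ℚ_[p] → ℂ) : ℚ_[p] → ℂ :=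
  fun x => ∫ y, φ y * ψ (x * y) ∂μ

/-- A Schwartz–Bruhat function on `ℚ_[p]`: locally constant with compact support. -/
def IsSchwartzBruhat {p : ℕ} [Fact p.Prime] (φ : ℚ_[p] → ℂ) : Prop :=
  IsLocallyConstant φ ∧ HasCompactSupport φ

/-- The indicator function of the ball `B_j = {x : ‖x‖ ≤ p^j}`. -/
noncomputable def ballInd (p : ℕ) [Fact p.Prime] (j : ℤ) : ℚ_[p] → ℂ :=
  Set.indicator {x : ℚ_[p] | ‖x‖ ≤ (p : ℝ) ^ j} (fun _ => (1 : ℂ))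

/-- The operator `Q_n = P̃_n P_n` where `P_n` is multiplication by `1_{B_n}`
and `P̃_n = 𝓕 P_n 𝓕⁻¹`: `Q_nφ = 𝓕(1_{B_n} · 𝓕⁻¹(1_{B_n} · φ))`. -/
noncomputable def Qop (p : ℕ) [Fact p.Prime] [MeasurableSpace ℚ_[p]]
    (μ : Measure ℚ_[p]) (ψ : ℚ_[p] → ℂ) (n : ℕ) (φ : ℚ_[p] → ℂ) : ℚ_[p] → ℂ :=
  fourierT p μ ψ (fun x => ballInd p n x *
    fourierInvT p μ ψ (fun y => ballInd p n y * φ y) x)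


/-! `P̃_n` is convolution with `K(w) = ∫_{B_n} ψ(y w) dy`. For `‖w‖ > p^{-n}` the character
`y ↦ ψ(y w)` is nontrivial on the subgroup `B_n`, so `K(w) = 0`; hence `K(z - x) ≠ 0` forces
`‖z - x‖ ≤ p^{-n} ≤ p^n`, and then `z ∈ B_n ↔ x ∈ B_n`. So
`1_{B_n}(z) K(z - x) = 1_{B_n}(x) K(z - x)`, which is the commutation of `P_n` with `P̃_n`. -/

theorem setIntegral_addSubgroup_eq_zero {G : Type*} [AddGroup G] [MeasurableSpace G]
    [MeasurableAdd G] (μ : Measure G) [μ.IsAddRightInvariant] (S : AddSubgroup G)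
    (hS : MeasurableSet (S : Set G)) {χ : G → ℂ} (hχ : ∀ a b, χ (a + b) = χ a * χ b)
    {y₀ : G} (hy₀ : y₀ ∈ S) (hχy₀ : χ y₀ ≠ 1) :
    ∫ y in S, χ y ∂μ = 0 := by
  have hshift : ∫ y in S, χ y ∂μ = χ y₀ * ∫ y in S, χ y ∂μ :=
    calc ∫ y in S, χ y ∂μ = ∫ y, (S : Set G).indicator χ (y + y₀) ∂μ := by
          rw [integral_add_right_eq_self, integral_indicator hS]
      _ = ∫ y, (S : Set G).indicator (fun y => χ y₀ * χ y) y ∂μ := by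
          classical
          congr 1; ext y
          simp only [Set.indicator_apply, SetLike.mem_coe, S.add_mem_cancel_right hy₀, hχ,
            mul_comm]
      _ = χ y₀ * ∫ y in S, χ y ∂μ := by rw [integral_indicator hS, integral_const_mul]
  have : (1 - χ y₀) * ∫ y in S, χ y ∂μ = 0 := by linear_combination hshift
  exact (mul_eq_zero.mp this).resolve_left (sub_ne_zero.mpr hχy₀.symm)

section Ball

variable {p : ℕ} [Fact p.Prime]

theorem one_lt_prime_cast : (1 : ℝ) < p := by exact_mod_cast (Fact.out : p.Prime).one_lt

theorem prime_cast_pos : (0 : ℝ) < p := zero_lt_one.trans one_lt_prime_cast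

variable (p) in
def ballSubgroup (j : ℤ) : AddSubgroup ℚ_[p] where
  carrier := {x | ‖x‖ ≤ (p : ℝ) ^ j}
  zero_mem' := by simp only [Set.mem_ofPred_eq, norm_zero]; positivity
  add_mem' hx hy := (IsUltrametricDist.norm_add_le_max _ _).trans (max_le hx hy)
  neg_mem' := by simp only [Set.mem_ofPred_eq, norm_neg, imp_self, implies_true]

theorem coe_ballSubgroup (j : ℤ) :
    (ballSubgroup p j : Set ℚ_[p]) = Metric.closedBall 0 ((p : ℝ) ^ j) := by
  ext x
  exact mem_closedBall_zero_iff.symm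

theorem ballInd_eq_indicator (j : ℤ) :
    ballInd p j = (ballSubgroup p j : Set ℚ_[p]).indicator 1 :=
  rfl

theorem ballInd_mul (j : ℤ) (f : ℚ_[p] → ℂ) :
    (fun y => ballInd p j y * f y) = (ballSubgroup p j : Set ℚ_[p]).indicator f := by
  ext y
  rw [ballInd_eq_indicator, ← Set.indicator_mul_left, Pi.one_def]
  simp only [one_mul]

theorem continuous_ballInd (j : ℤ) : Continuous (ballInd p j) := by
  rw [ballInd_eq_indicator, coe_ballSubgroup]
  exact IsClopen.continuous_indicator
    (IsUltrametricDist.isClopen_closedBall 0 (zpow_pos prime_cast_pos j).ne') continuous_const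

theorem hasCompactSupport_ballInd (j : ℤ) : HasCompactSupport (ballInd p j) := by
  rw [ballInd_eq_indicator, coe_ballSubgroup]
  exact HasCompactSupport.intro (isCompact_closedBall 0 _) fun x hx =>
    Set.indicator_of_notMem hx _

theorem ballInd_eq_of_norm_sub_le {j : ℤ} {x z : ℚ_[p]} (h : ‖z - x‖ ≤ (p : ℝ) ^ j) :
    ballInd p j z = ballInd p j x := by
  have hmem := (ballSubgroup p j).add_mem_cancel_right (y := x) h
  rw [add_sub_cancel] at hmem
  classical
  simp only [ballInd_eq_indicator, Set.indicator_apply, SetLike.mem_coe, hmem, Pi.one_apply]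

theorem integral_ballInd_mul_eq_zero [MeasurableSpace ℚ_[p]] [BorelSpace ℚ_[p]]
    (μ : Measure ℚ_[p]) [μ.IsAddHaarMeasure] {ψ : ℚ_[p] → ℂ}
    (hψ_add : ∀ x y : ℚ_[p], ψ (x + y) = ψ x * ψ y)
    (hψ_nontriv : ∃ x₀ : ℚ_[p], ‖x₀‖ = (p : ℝ) ∧ ψ x₀ ≠ 1)
    {j : ℤ} {w : ℚ_[p]} (hw : (p : ℝ) ^ (-j) < ‖w‖) :
    ∫ y, ballInd p j y * ψ (y * w) ∂μ = 0 := by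
  obtain ⟨x₀, hx₀, hψx₀⟩ := hψ_nontriv
  have hw₀ : w ≠ 0 := norm_pos_iff.mp ((zpow_pos prime_cast_pos _).trans hw)
  have hy₀ : x₀ / w ∈ ballSubgroup p j := by
    have hinv : ‖w⁻¹‖ ≤ (p : ℝ) ^ (j - 1) := by
      rw [Padic.norm_le_pow_iff_norm_lt_pow_add_one, sub_add_cancel, norm_inv]
      simpa only [zpow_neg, inv_inv] using inv_strictAnti₀ (zpow_pos prime_cast_pos _) hw
    show ‖x₀ / w‖ ≤ _
    rw [div_eq_mul_inv, norm_mul, hx₀]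
    calc (p : ℝ) * ‖w⁻¹‖ ≤ p * (p : ℝ) ^ (j - 1) := by gcongr
      _ = (p : ℝ) ^ j := by rw [← zpow_one_add₀ prime_cast_pos.ne', add_sub_cancel]
  have hS : MeasurableSet (ballSubgroup p j : Set ℚ_[p]) := by
    rw [coe_ballSubgroup]; exact measurableSet_closedBall
  rw [ballInd_mul j fun y => ψ (y * w), integral_indicator hS]
  exact setIntegral_addSubgroup_eq_zero μ (ballSubgroup p j) hS
    (fun a b => by rw [add_mul, hψ_add]) hy₀ (by rwa [div_mul_cancel₀ _ hw₀])

theorem fourierT_mul_fourierInvT [MeasurableSpace ℚ_[p]] [BorelSpace ℚ_[p]]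
    (μ : Measure ℚ_[p]) [IsFiniteMeasureOnCompacts μ] {ψ : ℚ_[p] → ℂ} (hψ_cont : Continuous ψ)
    (hψ_add : ∀ x y : ℚ_[p], ψ (x + y) = ψ x * ψ y) {h g : ℚ_[p] → ℂ}
    (hh : Continuous h) (hh_supp : HasCompactSupport h)
    (hg : Continuous g) (hg_supp : HasCompactSupport g) (x : ℚ_[p]) :
    fourierT p μ ψ (fun y => h y * fourierInvT p μ ψ g y) x
      = ∫ z, g z * ∫ y, h y * ψ (y * (z - x)) ∂μ ∂μ := by
  have hψ_sub (y z : ℚ_[p]) : ψ (y * z) * ψ (-(x * y)) = ψ (y * (z - x)) := by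
    rw [← hψ_add]; ring_nf
  calc fourierT p μ ψ (fun y => h y * fourierInvT p μ ψ g y) x
      = ∫ y, ∫ z, h y * (g z * ψ (y * (z - x))) ∂μ ∂μ := by
        simp only [fourierT, fourierInvT]
        congr 1; ext y
        rw [← integral_const_mul, ← integral_mul_const]
        congr 1; ext z
        rw [← hψ_sub]; ring
    _ = ∫ z, ∫ y, h y * (g z * ψ (y * (z - x))) ∂μ ∂μ := by
        refine integral_integral_swap_of_hasCompactSupport (by fun_prop) ?_
        refine HasCompactSupport.intro (hh_supp.prod hg_supp) fun ⟨y, z⟩ hyz => ?_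
        rcases not_and_or.mp hyz with hy | hz
        · simp [image_eq_zero_of_notMem_tsupport hy]
        · simp [image_eq_zero_of_notMem_tsupport hz]
    _ = ∫ z, g z * ∫ y, h y * ψ (y * (z - x)) ∂μ ∂μ := by
        congr 1; ext z
        rw [← integral_const_mul]
        congr 1; ext y
        ring

end Ball

theorem Pn_commutes_unit_invariant_general (p : ℕ) [Fact p.Prime]
    [MeasurableSpace ℚ_[p]] [BorelSpace ℚ_[p]]
    (μ : Measure ℚ_[p]) [μ.IsAddHaarMeasure]
    (ψ : ℚ_[p] → ℂ) (hψ_cont : Continuous ψ)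
    (hψ_add : ∀ x y : ℚ_[p], ψ (x + y) = ψ x * ψ y)
    (hψ_nontriv : ∃ x₀ : ℚ_[p], ‖x₀‖ = (p : ℝ) ∧ ψ x₀ ≠ 1)
    (n : ℕ) (φ : ℚ_[p] → ℂ) (hφ : IsSchwartzBruhat φ) :
    ∀ x : ℚ_[p],
      fourierT p μ ψ (fun y => ballInd p n y *
          fourierInvT p μ ψ (fun z => ballInd p n z * φ z) y) x
        = ballInd p n x *
          fourierT p μ ψ (fun y => ballInd p n y * fourierInvT p μ ψ φ y) x := by
  intro x
  set K : ℚ_[p] → ℂ := fun w => ∫ y, ballInd p n y * ψ (y * w) ∂μ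
  have hK (z : ℚ_[p]) : ballInd p n z * K (z - x) = ballInd p n x * K (z - x) := by
    by_cases hz : ‖z - x‖ ≤ (p : ℝ) ^ (-(n : ℤ))
    · have hle : (p : ℝ) ^ (-(n : ℤ)) ≤ (p : ℝ) ^ (n : ℤ) :=
        zpow_le_zpow_right₀ one_lt_prime_cast.le (by omega)
      rw [ballInd_eq_of_norm_sub_le (hz.trans hle)]
    · simp only [K, integral_ballInd_mul_eq_zero μ hψ_add hψ_nontriv (not_le.mp hz), mul_zero]
  have hφ_cont := hφ.1.continuous
  have hB := continuous_ballInd (p := p) n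
  have hB_supp := hasCompactSupport_ballInd (p := p) n
  rw [fourierT_mul_fourierInvT μ hψ_cont hψ_add hB hB_supp (g := fun z => ballInd p n z * φ z)
      (hB.mul hφ_cont) hφ.2.mul_left,
    fourierT_mul_fourierInvT μ hψ_cont hψ_add hB hB_supp hφ_cont hφ.2, ← integral_const_mul]
  congr 1; ext z
  linear_combination φ z * hK z

/-- Step in the proof of Theorem XI: `P_n` and `P̃_n` commute on unit-invariant
Schwartz–Bruhat functions. -/
theorem Pn_commutes_unit_invariant (p : ℕ) [Fact p.Prime]
    [MeasurableSpace ℚ_[p]] [BorelSpace ℚ_[p]]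
    (μ : Measure ℚ_[p]) [μ.IsAddHaarMeasure]
    (hμ : μ {x : ℚ_[p] | ‖x‖ ≤ 1} = 1)
    (ψ : ℚ_[p] → ℂ) (hψ_cont : Continuous ψ)
    (hψ_add : ∀ x y : ℚ_[p], ψ (x + y) = ψ x * ψ y)
    (hψ_norm : ∀ x : ℚ_[p], ‖ψ x‖ = 1)
    (hψ_triv : ∀ x : ℚ_[p], ‖x‖ ≤ 1 → ψ x = 1)
    (hψ_nontriv : ∃ x₀ : ℚ_[p], ‖x₀‖ = (p : ℝ) ∧ ψ x₀ ≠ 1)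
    (n : ℕ) (φ : ℚ_[p] → ℂ) (hφ : IsSchwartzBruhat φ)
    (hφinv : ∀ (u x : ℚ_[p]), ‖u‖ = 1 → φ (u * x) = φ x) :
    ∀ x : ℚ_[p],
      fourierT p μ ψ (fun y => ballInd p n y *
          fourierInvT p μ ψ (fun z => ballInd p n z * φ z) y) x
        = ballInd p n x *
          fourierT p μ ψ (fun y => ballInd p n y * fourierInvT p μ ψ φ y) x :=
  Pn_commutes_unit_invariant_general p μ ψ hψ_cont hψ_add hψ_nontriv n φ hφ
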